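/- Fix a natural number n and let P₀([n]) be the poset of nonempty subsets of [n] = {0, …, n}, viewed as a category via inclusions. Let RedFun_n denote the full subcategory of Fun(P₀([n]), TopCat) spanned by the reduced punctured cubes, i.e. diagrams whose value at every singleton {j} is a terminal (one-point) space. Let L_n : TopCat ⥤ RedFun_n be the functor sending a space X to the diagram S ↦ X ∗ S, where X ∗ S is the join model given by the pushout of the span S ← X × S → X × Δ^S (here S carries the discrete topology, X × S → S is the projection, and X × S → X × Δ^S is id_X times the inclusion of the vertices of Δ^S), with structure maps induced by the face inclusions Δ^S ↪ Δ^T and the inclusions S ↪ T. Then L_n admits a right adjoint R_n : RedFun_n ⥤ TopCat. (Consequently the composite R_n ∘ L_n — the functor T_n𝕀 of Goodwillie calculus, and Hopkins's functor used to define symmetric LS cocategory — inherits the structure of a monad on TopCat from the adjunction.) -/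

import Mathlib

open CategoryTheory Limits

/-- The poset `P₀([n])` of nonempty subsets of `[n] = {0, …, n}`, viewed as a category
via inclusions. -/
abbrev PosetP0 (n : ℕ) := {S : Finset (Fin (n + 1)) // S.Nonempty}

/-- The singleton `{j}` as an object of `P₀([n])`. -/
def singletonObj (n : ℕ) (j : Fin (n + 1)) : PosetP0 n :=
  ⟨{j}, Finset.singleton_nonempty j⟩

/-- A punctured `(n+1)`-cube `𝒳 : P₀([n]) ⥤ C` is reduced if its value at every
singleton is a terminal object. -/
def IsReducedCube {C : Type*} [Category C] {n : ℕ} (𝒳 : PosetP0 n ⥤ C) : Prop :=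
  ∀ j : Fin (n + 1), Nonempty (IsTerminal (𝒳.obj (singletonObj n j)))

/-- The topological standard simplex `Δ^S` on vertex set `S ⊆ [n]`: probability vectors
on `[n]` supported in `S` (the ambient model of `{t : S → ℝ | t ≥ 0, ∑ t = 1} ⊆ ℝ^S`,
realized inside `ℝ^{[n]}` so that face inclusions are literally extensions by zero). -/
def simplexOn (n : ℕ) (S : Finset (Fin (n + 1))) : TopCat :=
  TopCat.of {t : Fin (n + 1) → ℝ //
    (∀ i, 0 ≤ t i) ∧ (∀ i, i ∉ S → t i = 0) ∧ ∑ i, t i = 1}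

/-- The face inclusion `Δ^S ↪ Δ^T` induced by an inclusion `S ⊆ T`. -/
def faceIncl {n : ℕ} {S T : Finset (Fin (n + 1))} (h : S ⊆ T) :
    simplexOn n S ⟶ simplexOn n T :=
  TopCat.ofHom ⟨fun t => ⟨t.val, t.2.1, fun i hi => t.2.2.1 i (fun hS => hi (h hS)), t.2.2.2⟩,
    Continuous.subtype_mk continuous_subtype_val _⟩

/-- The finite set `S`, as a discrete topological space. -/
def vert (n : ℕ) (S : PosetP0 n) : TopCat := TopCat.discrete.obj ↥(S.val)

/-- The map of discrete vertex spaces induced by an inclusion `S ⊆ T`. -/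
def vertMap {n : ℕ} {S T : PosetP0 n} (f : S ⟶ T) : vert n S ⟶ vert n T :=
  TopCat.discrete.map (TypeCat.ofHom (fun (j : ↥(S.val)) => (⟨j.val, leOfHom f j.2⟩ : ↥(T.val))))

/-- The vertex `e_j ∈ Δ^S` attached to `j ∈ S`. -/
def vertexPt {n : ℕ} (S : PosetP0 n) (j : ↥(S.val)) : ↑(simplexOn n S.val) :=
  ⟨fun i => if i = j.val then 1 else 0,
    fun i => by dsimp only; split <;> norm_num,
    fun i hi => by
      dsimp only; rw [if_neg]; rintro rfl; exact hi j.2,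
    by simp⟩

/-- The product `X × S` (with `S` discrete), the corner of the join span. -/
def prodVertObj (n : ℕ) (X : TopCat) (S : PosetP0 n) : TopCat :=
  TopCat.of (↑X × ↑(vert n S))

/-- The product `X × Δ^S`. -/
def prodSimplexObj (n : ℕ) (X : TopCat) (S : PosetP0 n) : TopCat :=
  TopCat.of (↑X × ↑(simplexOn n S.val))

/-- The projection `X × S → S` (left leg of the join span). -/
def spanProj (n : ℕ) (X : TopCat) (S : PosetP0 n) : prodVertObj n X S ⟶ vert n S :=
  ConcreteCategory.ofHom (C := TopCat) ⟨Prod.snd, continuous_snd⟩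

/-- The map `X × S → X × Δ^S`, `id_X` times the inclusion of the vertices
(right leg of the join span). -/
def spanIncl (n : ℕ) (X : TopCat) (S : PosetP0 n) :
    prodVertObj n X S ⟶ prodSimplexObj n X S :=
  TopCat.ofHom (ContinuousMap.prodMap (ContinuousMap.id ↑X)
    (@ContinuousMap.mk ↑(vert n S) _ ⊥ _ (fun j => vertexPt S j) continuous_bot))

/-- `id_X × (face inclusion)` on `X × Δ^S`. -/
def prodFaceMap (n : ℕ) (X : TopCat) {S T : PosetP0 n} (f : S ⟶ T) :
    prodSimplexObj n X S ⟶ prodSimplexObj n X T :=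
  TopCat.ofHom (ContinuousMap.prodMap (ContinuousMap.id ↑X) (faceIncl (leOfHom f)).hom)

/-- `id_X × (vertex-set inclusion)` on `X × S`. -/
def prodVertMap (n : ℕ) (X : TopCat) {S T : PosetP0 n} (f : S ⟶ T) :
    prodVertObj n X S ⟶ prodVertObj n X T :=
  TopCat.ofHom (ContinuousMap.prodMap (ContinuousMap.id ↑X) (vertMap f).hom)

/-- `f × id_{Δ^S}` on `X × Δ^S`, for `f : X ⟶ Y`. -/
def prodSimplexLeft (n : ℕ) {X Y : TopCat} (f : X ⟶ Y) (S : PosetP0 n) :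
    prodSimplexObj n X S ⟶ prodSimplexObj n Y S :=
  TopCat.ofHom (ContinuousMap.prodMap f.hom (ContinuousMap.id ↑(simplexOn n S.val)))

/-- `f × id_S` on `X × S`, for `f : X ⟶ Y`. -/
def prodVertLeft (n : ℕ) {X Y : TopCat} (f : X ⟶ Y) (S : PosetP0 n) :
    prodVertObj n X S ⟶ prodVertObj n Y S :=
  TopCat.ofHom (ContinuousMap.prodMap f.hom (ContinuousMap.id ↑(vert n S)))

/-- The punctured cube `S ↦ X ∗ S`, where `X ∗ S` is the join model given by the pushout
of the span `S ← X × S → X × Δ^S`, with structure maps induced by the face inclusions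
`Δ^S ↪ Δ^T` and the inclusions `S ↪ T`. -/
noncomputable def joinCube (n : ℕ) (X : TopCat) : PosetP0 n ⥤ TopCat where
  obj S := pushout (spanProj n X S) (spanIncl n X S)
  map {S T} f :=
    pushout.map (spanProj n X S) (spanIncl n X S) (spanProj n X T) (spanIncl n X T)
      (vertMap f) (prodFaceMap n X f) (prodVertMap n X f)
      (by ext p; rfl) (by ext p <;> rfl)
  map_id S := by
    have h1 : vertMap (𝟙 S) = 𝟙 (vert n S) := by ext j; rfl
    have h2 : prodFaceMap n X (𝟙 S) = 𝟙 (prodSimplexObj n X S) := by ext p <;> rfl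
    apply pushout.hom_ext <;> simp [h1, h2]
  map_comp {S T U} f g := by
    have h1 : vertMap (f ≫ g) = vertMap f ≫ vertMap g := by ext j; rfl
    have h2 : prodFaceMap n X (f ≫ g) = prodFaceMap n X f ≫ prodFaceMap n X g := by
      ext p <;> rfl
    apply pushout.hom_ext
    · rw [pushout.inl_desc, pushout.inl_desc_assoc, Category.assoc, pushout.inl_desc, h1,
        Category.assoc]
    · rw [pushout.inr_desc, pushout.inr_desc_assoc, Category.assoc, pushout.inr_desc, h2,
        Category.assoc]

/-- The natural transformation `X ∗ (-) ⟶ Y ∗ (-)` induced by `f : X ⟶ Y`. -/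
noncomputable def joinCubeMap (n : ℕ) {X Y : TopCat} (f : X ⟶ Y) :
    joinCube n X ⟶ joinCube n Y where
  app S :=
    pushout.map (spanProj n X S) (spanIncl n X S) (spanProj n Y S) (spanIncl n Y S)
      (𝟙 (vert n S)) (prodSimplexLeft n f S) (prodVertLeft n f S)
      (by ext p; rfl) (by ext p <;> rfl)
  naturality := by
    intro S T g
    have h1 : vertMap g ≫ 𝟙 (vert n T) = 𝟙 (vert n S) ≫ vertMap g := by ext j; rfl
    have h2 : prodFaceMap n X g ≫ prodSimplexLeft n f T =
        prodSimplexLeft n f S ≫ prodFaceMap n Y g := by ext p <;> rfl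
    dsimp [joinCube]
    apply pushout.hom_ext
    · rw [pushout.inl_desc_assoc, Category.assoc, pushout.inl_desc, pushout.inl_desc_assoc,
        Category.assoc, pushout.inl_desc]
      simp only [Category.id_comp, Category.comp_id]
    · rw [pushout.inr_desc_assoc, Category.assoc, pushout.inr_desc, pushout.inr_desc_assoc,
        Category.assoc, pushout.inr_desc, reassoc_of% h2]

/-- The functor `TopCat ⥤ Fun(P₀([n]), TopCat)` sending `X` to the join diagram
`S ↦ X ∗ S` (pushout model), functorially in `X`. -/
noncomputable def joinCubeFunctor (n : ℕ) : TopCat ⥤ (PosetP0 n ⥤ TopCat) where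
  obj X := joinCube n X
  map f := joinCubeMap n f
  map_id X := by
    apply NatTrans.ext; funext S
    have h2 : prodSimplexLeft n (𝟙 X) S = 𝟙 (prodSimplexObj n X S) := by ext p <;> rfl
    dsimp [joinCubeMap]
    apply pushout.hom_ext <;> simp [h2] <;> rfl
  map_comp {X Y Z} f g := by
    apply NatTrans.ext; funext S
    have h2 : prodSimplexLeft n (f ≫ g) S =
        prodSimplexLeft n f S ≫ prodSimplexLeft n g S := by ext p <;> rfl
    dsimp [joinCubeMap, joinCube]
    apply pushout.hom_ext
    · rw [pushout.inl_desc, pushout.inl_desc_assoc, Category.assoc, pushout.inl_desc] <;>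
        simp only [Category.id_comp]
    · rw [pushout.inr_desc, pushout.inr_desc_assoc, Category.assoc, pushout.inr_desc, h2,
        Category.assoc]


/-!
A map `L_n X ⟶ F` into a reduced cube is a compatible family of maps out of the pushouts
`X ∗ S = S ⊔_{X × S} (X × Δ^S)`. On the vertex part there is no choice: `j ∈ S` must go to
the image in `F S` of the unique point of `F {j}`. Naturality along `{j} ⊆ S` forces the same
of the image of `(x, e_j)`, so the gluing condition is automatic and such a map is the same as
a natural family of maps `X × Δ^S → F S`. Since each `Δ^S` is locally compact, the exponential
law turns this into a single map from `X` into the space `R_n F` of natural families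
`Δ^S → F S`, naturally in `X`.
-/

def TopCat.isTerminalOfUnique (Z : TopCat) [Unique Z] : IsTerminal Z :=
  TopCat.isTerminalPUnit.ofIso (TopCat.isoOfHomeo (Homeomorph.homeomorphOfUnique _ Z))

theorem TopCat.subsingleton_of_isTerminal {Z : TopCat} (h : IsTerminal Z) : Subsingleton Z :=
  (TopCat.homeoOfIso (h.uniqueUpToIso TopCat.isTerminalPUnit)).injective.subsingleton

theorem isClosed_simplexOn (n : ℕ) (S : Finset (Fin (n + 1))) :
    IsClosed
      {t : Fin (n + 1) → ℝ | (∀ i, 0 ≤ t i) ∧ (∀ i, i ∉ S → t i = 0) ∧ ∑ i, t i = 1} := by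
  have h :
      {t : Fin (n + 1) → ℝ | (∀ i, 0 ≤ t i) ∧ (∀ i, i ∉ S → t i = 0) ∧ ∑ i, t i = 1} =
        stdSimplex ℝ (Fin (n + 1)) ∩ ⋂ i ∈ Sᶜ, {t | t i = 0} := by
    ext t; simp [stdSimplex]; tauto
  rw [h]
  exact (isClosed_stdSimplex _ _).inter <| isClosed_biInter fun i _ =>
    isClosed_eq (continuous_apply i) continuous_const

instance (n : ℕ) (S : Finset (Fin (n + 1))) : LocallyCompactSpace (simplexOn n S) :=
  (isClosed_simplexOn n S).locallyCompactSpace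

instance (n : ℕ) (j : Fin (n + 1)) : Unique (vert n (singletonObj n j)) :=
  inferInstanceAs (Unique ({j} : Finset (Fin (n + 1))))

instance (n : ℕ) (j : Fin (n + 1)) : Unique (simplexOn n (singletonObj n j).val) where
  default := vertexPt _ ⟨j, Finset.mem_singleton_self j⟩
  uniq := by
    rintro ⟨t, -, hzero, hsum⟩
    have hzero' : ∀ i ≠ j, t i = 0 := fun i hi => hzero i (by simpa [singletonObj] using hi)
    have hj : t j = 1 := by
      rwa [Finset.sum_eq_single j (fun i _ hi => hzero' i hi) (by simp)] at hsum
    refine Subtype.ext (funext fun i => ?_)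
    by_cases hi : i = j
    · subst hi; simpa [vertexPt] using hj
    · simpa [vertexPt, hi] using hzero' i hi

instance (n : ℕ) (X : TopCat) (j : Fin (n + 1)) : IsIso (spanIncl n X (singletonObj n j)) := by
  have : spanIncl n X (singletonObj n j) = (TopCat.isoOfHomeo
      ((Homeomorph.refl X).prodCongr (Homeomorph.homeomorphOfUnique _ _))).hom := by
    ext p
    exact Prod.ext rfl (Subsingleton.elim _ _)
  rw [this]
  infer_instance

theorem joinCube_isReduced (n : ℕ) (X : TopCat) : IsReducedCube (joinCube n X) := fun _ =>
  ⟨(TopCat.isTerminalOfUnique _).ofIso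
    (@asIso _ _ _ _ (pushout.inl _ _) (pushout_inl_iso_of_right_iso _ _))⟩

section Reduced

variable {n : ℕ} {F : PosetP0 n ⥤ TopCat}

def singletonHom (S : PosetP0 n) (j : S.val) : singletonObj n j ⟶ S :=
  homOfLE (Finset.singleton_subset_iff.mpr j.2)

noncomputable def IsReducedCube.vertex (hF : IsReducedCube F) (S : PosetP0 n) (j : S.val) :
    F.obj S :=
  F.map (singletonHom S j) ((hF j).some.from (TopCat.of PUnit) PUnit.unit)

theorem IsReducedCube.map_singletonHom (hF : IsReducedCube F) (S : PosetP0 n) (j : S.val)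
    (p : F.obj (singletonObj n j)) : F.map (singletonHom S j) p = hF.vertex S j :=
  have := TopCat.subsingleton_of_isTerminal (hF j).some
  congrArg _ (Subsingleton.elim _ _)

theorem IsReducedCube.map_vertex (hF : IsReducedCube F) {S T : PosetP0 n} (f : S ⟶ T)
    (j : S.val) : F.map f (hF.vertex S j) = hF.vertex T ⟨j, leOfHom f j.2⟩ := by
  rw [IsReducedCube.vertex, ← ConcreteCategory.comp_apply, ← F.map_comp,
    Subsingleton.elim (singletonHom S j ≫ f) (singletonHom T ⟨j, leOfHom f j.2⟩),
    hF.map_singletonHom]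

end Reduced

section JoinPoints

variable {n : ℕ} {X : TopCat}

noncomputable abbrev joinInl (n : ℕ) (X : TopCat) (S : PosetP0 n) :
    vert n S ⟶ (joinCube n X).obj S :=
  pushout.inl (spanProj n X S) (spanIncl n X S)

noncomputable abbrev joinInr (n : ℕ) (X : TopCat) (S : PosetP0 n) :
    prodSimplexObj n X S ⟶ (joinCube n X).obj S :=
  pushout.inr (spanProj n X S) (spanIncl n X S)

theorem joinCube_map_joinInl {S T : PosetP0 n} (f : S ⟶ T) (j : S.val) :
    (joinCube n X).map f (joinInl n X S j) = joinInl n X T ⟨j, leOfHom f j.2⟩ :=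
  ConcreteCategory.congr_hom (C := TopCat)
    (pushout.inl_desc (f := spanProj n X S) (g := spanIncl n X S) _ _ _) j

theorem joinCube_map_joinInr {S T : PosetP0 n} (f : S ⟶ T) (x : X) (t : simplexOn n S.val) :
    (joinCube n X).map f (joinInr n X S (x, t)) = joinInr n X T (x, faceIncl (leOfHom f) t) :=
  ConcreteCategory.congr_hom (C := TopCat)
    (pushout.inr_desc (f := spanProj n X S) (g := spanIncl n X S) _ _ _)
    ((x, t) : prodSimplexObj n X S)

theorem joinCubeMap_app_joinInr {Y : TopCat} (g : X ⟶ Y) (S : PosetP0 n) (x : X)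
    (t : simplexOn n S.val) :
    (joinCubeMap n g).app S (joinInr n X S (x, t)) = joinInr n Y S (g x, t) :=
  ConcreteCategory.congr_hom (C := TopCat)
    (pushout.inr_desc (f := spanProj n X S) (g := spanIncl n X S) _ _ _)
    ((x, t) : prodSimplexObj n X S)

theorem joinCube_obj_hom_ext {S : PosetP0 n} {Z : TopCat} {a b : (joinCube n X).obj S ⟶ Z}
    (hl : ∀ j : S.val, a (joinInl n X S j) = b (joinInl n X S j))
    (hr : ∀ x t, a (joinInr n X S (x, t)) = b (joinInr n X S (x, t))) : a = b :=
  pushout.hom_ext (by ext j; exact hl j) (by ext ⟨x, t⟩; exact hr x t)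

end JoinPoints

section Adjunction

variable {n : ℕ} {X : TopCat} {F : PosetP0 n ⥤ TopCat}

/-- The value `R_n F` of the right adjoint. -/
def simplexNatMaps (F : PosetP0 n ⥤ TopCat) : TopCat :=
  TopCat.of {φ : ∀ S : PosetP0 n, C(simplexOn n S.val, F.obj S) //
    ∀ ⦃S T : PosetP0 n⦄ (f : S ⟶ T) (t : simplexOn n S.val),
      φ T (faceIncl (leOfHom f) t) = F.map f (φ S t)}

theorem IsReducedCube.simplexNatMaps_apply_vertexPt (hF : IsReducedCube F)
    (φ : simplexNatMaps F) (S : PosetP0 n) (j : S.val) :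
    φ.1 S (vertexPt S j) = hF.vertex S j := by
  rw [← hF.map_singletonHom S j (φ.1 _ (vertexPt _ ⟨j, Finset.mem_singleton_self _⟩)), ← φ.2]
  rfl

theorem IsReducedCube.app_joinInl (hF : IsReducedCube F) (ψ : joinCube n X ⟶ F)
    (S : PosetP0 n) (j : S.val) : ψ.app S (joinInl n X S j) = hF.vertex S j := by
  have h := ConcreteCategory.congr_hom (C := TopCat) (ψ.naturality (singletonHom S j))
    (joinInl n X _ ⟨j, Finset.mem_singleton_self _⟩)
  rw [ConcreteCategory.comp_apply, ConcreteCategory.comp_apply, joinCube_map_joinInl] at h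
  rw [← hF.map_singletonHom S j, ← h]

theorem app_joinInr_faceIncl (ψ : joinCube n X ⟶ F) {S T : PosetP0 n} (f : S ⟶ T) (x : X)
    (t : simplexOn n S.val) :
    ψ.app T (joinInr n X T (x, faceIncl (leOfHom f) t)) =
      F.map f (ψ.app S (joinInr n X S (x, t))) := by
  rw [← joinCube_map_joinInr, ← ConcreteCategory.comp_apply, ψ.naturality,
    ConcreteCategory.comp_apply]

noncomputable def curryJoinHom (ψ : joinCube n X ⟶ F) : X ⟶ simplexNatMaps F :=
  TopCat.ofHom ⟨fun x => ⟨fun S => ContinuousMap.curry (joinInr n X S ≫ ψ.app S).hom x,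
    fun _ _ f t => app_joinInr_faceIncl ψ f x t⟩,
    (continuous_pi fun _ => (ContinuousMap.curry _).continuous).subtype_mk _⟩

noncomputable def IsReducedCube.uncurryJoinHomApp (hF : IsReducedCube F)
    (g : X ⟶ simplexNatMaps F) (S : PosetP0 n) : (joinCube n X).obj S ⟶ F.obj S :=
  pushout.desc
    (ConcreteCategory.ofHom (C := TopCat) (X := vert n S)
      ⟨hF.vertex S, continuous_bot⟩)
    (TopCat.ofHom (ContinuousMap.uncurry ⟨fun x => (g x).1 S,
      (continuous_apply S).comp (continuous_subtype_val.comp g.hom.continuous)⟩))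
    (by ext ⟨x, j⟩; exact (hF.simplexNatMaps_apply_vertexPt (g x) S j).symm)

theorem IsReducedCube.uncurryJoinHomApp_joinInl (hF : IsReducedCube F)
    (g : X ⟶ simplexNatMaps F) (S : PosetP0 n) (j : S.val) :
    hF.uncurryJoinHomApp g S (joinInl n X S j) = hF.vertex S j :=
  ConcreteCategory.congr_hom (C := TopCat)
    (pushout.inl_desc (f := spanProj n X S) (g := spanIncl n X S) _ _ _) j

theorem IsReducedCube.uncurryJoinHomApp_joinInr (hF : IsReducedCube F)
    (g : X ⟶ simplexNatMaps F) (S : PosetP0 n) (x : X) (t : simplexOn n S.val) :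
    hF.uncurryJoinHomApp g S (joinInr n X S (x, t)) = (g x).1 S t :=
  ConcreteCategory.congr_hom (C := TopCat)
    (pushout.inr_desc (f := spanProj n X S) (g := spanIncl n X S) _ _ _)
    ((x, t) : prodSimplexObj n X S)

noncomputable def IsReducedCube.uncurryJoinHom (hF : IsReducedCube F)
    (g : X ⟶ simplexNatMaps F) : joinCube n X ⟶ F where
  app := hF.uncurryJoinHomApp g
  naturality S T f := by
    refine joinCube_obj_hom_ext (fun j => ?_) (fun x t => ?_) <;>
      simp only [ConcreteCategory.comp_apply]
    · rw [joinCube_map_joinInl, hF.uncurryJoinHomApp_joinInl, hF.uncurryJoinHomApp_joinInl,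
        hF.map_vertex]
    · rw [joinCube_map_joinInr, hF.uncurryJoinHomApp_joinInr, hF.uncurryJoinHomApp_joinInr,
        (g x).2 f t]

noncomputable def IsReducedCube.joinHomEquiv (hF : IsReducedCube F) :
    (joinCube n X ⟶ F) ≃ (X ⟶ simplexNatMaps F) where
  toFun := curryJoinHom
  invFun := hF.uncurryJoinHom
  left_inv ψ := by
    ext S : 2
    exact joinCube_obj_hom_ext
      (fun j => (hF.uncurryJoinHomApp_joinInl _ S j).trans (hF.app_joinInl ψ S j).symm)
      (fun x t => hF.uncurryJoinHomApp_joinInr _ S x t)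
  right_inv g := by
    ext x : 2
    exact Subtype.ext (funext fun S => ContinuousMap.ext fun t =>
      hF.uncurryJoinHomApp_joinInr g S x t)

theorem curryJoinHom_joinCubeMap_comp {Y : TopCat} (f : Y ⟶ X) (ψ : joinCube n X ⟶ F) :
    curryJoinHom (joinCubeMap n f ≫ ψ) = f ≫ curryJoinHom ψ := by
  ext y : 2
  exact Subtype.ext (funext fun S => ContinuousMap.ext fun t =>
    congrArg (ψ.app S) (joinCubeMap_app_joinInr f S y t))

end Adjunction

noncomputable def joinReducedFunctor (n : ℕ) :
    TopCat ⥤ ObjectProperty.FullSubcategory (IsReducedCube (C := TopCat) (n := n)) :=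
  ObjectProperty.lift _ (joinCubeFunctor n) (joinCube_isReduced n)

theorem joinReducedFunctor_isLeftAdjoint (n : ℕ) : (joinReducedFunctor n).IsLeftAdjoint :=
  (Adjunction.adjunctionOfEquivRight (F := joinReducedFunctor n)
    (G_obj := fun F => simplexNatMaps F.obj)
    (fun X F => InducedCategory.homEquiv.trans (F.property.joinHomEquiv (X := X)))
    (fun _ _ _ f g => curryJoinHom_joinCubeMap_comp f g.hom)).isLeftAdjoint

/-- the join functor `L_n : TopCat ⥤ RedFun_n`, sending `X` to the reduced
punctured cube `S ↦ X ∗ S` (the pushout join model, with structure maps induced by the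
face inclusions and the inclusions `S ↪ T`), admits a right adjoint `R_n`. -/
theorem joinFunctor_isLeftAdjoint (n : ℕ) :
    ∃ Ln : TopCat ⥤ ObjectProperty.FullSubcategory (IsReducedCube (C := TopCat) (n := n)),
      Nonempty (Ln ⋙ ObjectProperty.ι (IsReducedCube (C := TopCat) (n := n)) ≅
        joinCubeFunctor n) ∧
      Ln.IsLeftAdjoint :=
  ⟨joinReducedFunctor n, ⟨ObjectProperty.liftCompιIso _ _ _⟩,
    joinReducedFunctor_isLeftAdjoint n⟩
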